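/- In the braid group B_n, for each pair n ≥ t > s ≥ 1 the fundamental element δ = a_{n(n-1)}⋯a_{21} admits a factorization beginning with a_{ts}: specifically, δ = a_{ts} · (a_{n(n-1)}⋯a_{(t+2)(t+1)} a_{(t+1)s} a_{s(s-1)}⋯a_{21}) · (a_{t(t-1)}⋯a_{(s+2)(s+1)}). -/
import Mathlib


/-- Relators for the Artin presentation of the braid group `B n`.
Generator `i : Fin (n-1)` stands for the Artin generator `σ_{i+1}`. -/
def braidRels (n : ℕ) : Set (FreeGroup (Fin (n - 1))) :=
  {r | (∃ i j : Fin (n - 1), (i : ℕ) + 1 < (j : ℕ) ∧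
          r = FreeGroup.of i * FreeGroup.of j * (FreeGroup.of i)⁻¹ * (FreeGroup.of j)⁻¹) ∨
       (∃ i j : Fin (n - 1), (i : ℕ) + 1 = (j : ℕ) ∧
          r = FreeGroup.of i * FreeGroup.of j * FreeGroup.of i *
              (FreeGroup.of j * FreeGroup.of i * FreeGroup.of j)⁻¹)}

/-- The braid group on `n` strands, via the Artin presentation. -/
abbrev Braid (n : ℕ) := PresentedGroup (braidRels n)

/-- The Artin generator `σ_i` of `B n`, defined for `1 ≤ i ≤ n-1`
(junk value `1` out of range). -/
def sigma (n i : ℕ) : Braid n :=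
  if h : i - 1 < n - 1 ∧ 1 ≤ i then PresentedGroup.of ⟨i - 1, h.1⟩ else 1

/-- The band generator
`a_{ts} = (σ_{t-1} ⋯ σ_{s+1}) σ_s (σ_{s+1}⁻¹ ⋯ σ_{t-1}⁻¹)` for `n ≥ t > s ≥ 1`. -/
def band (n t s : ℕ) : Braid n :=
  (((List.range (t - 1 - s)).map (fun k => sigma n (t - 1 - k))).prod) * sigma n s *
    (((List.range (t - 1 - s)).map (fun k => sigma n (t - 1 - k))).prod)⁻¹

/-- The fundamental element `δ = σ_{n-1} σ_{n-2} ⋯ σ_1`. -/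
def delta (n : ℕ) : Braid n :=
  ((List.range (n - 1)).map (fun k => sigma n (n - 1 - k))).prod

lemma braid_mk_rel {n : ℕ} {r : FreeGroup (Fin (n-1))} (h : r ∈ braidRels n) :
    PresentedGroup.mk (braidRels n) r = 1 := by
  have : r ∈ Subgroup.normalClosure (braidRels n) := Subgroup.subset_normalClosure h
  exact (QuotientGroup.eq_one_iff r).mpr this

lemma sigma_out {n i : ℕ} (h : ¬ (i - 1 < n - 1 ∧ 1 ≤ i)) : sigma n i = 1 := by
  simp [sigma, h]

lemma sigma_in {n i : ℕ} (h : i - 1 < n - 1 ∧ 1 ≤ i) :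
    sigma n i = PresentedGroup.of ⟨i - 1, h.1⟩ := by
  simp [sigma, h]

/-- commutation relation -/
lemma sigma_comm {n : ℕ} {i j : ℕ} (hij : i + 1 < j) :
    sigma n i * sigma n j = sigma n j * sigma n i := by
  by_cases hi : i - 1 < n - 1 ∧ 1 ≤ i
  · by_cases hj : j - 1 < n - 1 ∧ 1 ≤ j
    · rw [sigma_in hi, sigma_in hj]
      have hr : (FreeGroup.of (⟨i-1, hi.1⟩ : Fin (n-1)) * FreeGroup.of (⟨j-1, hj.1⟩ : Fin (n-1)) *
          (FreeGroup.of (⟨i-1, hi.1⟩ : Fin (n-1)))⁻¹ * (FreeGroup.of (⟨j-1, hj.1⟩ : Fin (n-1)))⁻¹)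
          ∈ braidRels n := by
        left; exact ⟨_, _, by simp; omega, rfl⟩
      have := braid_mk_rel hr
      have h2 : (PresentedGroup.of (⟨i-1, hi.1⟩ : Fin (n-1)) : Braid n) *
          PresentedGroup.of ⟨j-1, hj.1⟩ *
          (PresentedGroup.of (⟨i-1, hi.1⟩ : Fin (n-1)))⁻¹ *
          (PresentedGroup.of (⟨j-1, hj.1⟩ : Fin (n-1)))⁻¹ = 1 := by
        simpa [PresentedGroup.of] using this
      calc PresentedGroup.of (⟨i-1, hi.1⟩ : Fin (n-1)) * (PresentedGroup.of ⟨j-1, hj.1⟩ : Braid n)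
          = (PresentedGroup.of ⟨i-1, hi.1⟩ * PresentedGroup.of ⟨j-1, hj.1⟩ *
            (PresentedGroup.of (⟨i-1, hi.1⟩ : Fin (n-1)))⁻¹ *
            (PresentedGroup.of (⟨j-1, hj.1⟩ : Fin (n-1)))⁻¹) *
            (PresentedGroup.of ⟨j-1, hj.1⟩ * PresentedGroup.of ⟨i-1, hi.1⟩) := by group
        _ = _ := by rw [h2]; group
    · rw [sigma_out hj]; group
  · rw [sigma_out hi]; group

/-- braid relation -/
lemma sigma_braid {n : ℕ} {i : ℕ} (h1 : 1 ≤ i) (h2 : i + 1 ≤ n - 1) :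
    sigma n i * sigma n (i+1) * sigma n i = sigma n (i+1) * sigma n i * sigma n (i+1) := by
  have hi : i - 1 < n - 1 ∧ 1 ≤ i := ⟨by omega, h1⟩
  have hj : (i+1) - 1 < n - 1 ∧ 1 ≤ i + 1 := ⟨by omega, by omega⟩
  rw [sigma_in hi, sigma_in hj]
  have hr : (FreeGroup.of (⟨i-1, hi.1⟩ : Fin (n-1)) * FreeGroup.of (⟨i+1-1, hj.1⟩ : Fin (n-1)) *
      FreeGroup.of (⟨i-1, hi.1⟩ : Fin (n-1)) *
      (FreeGroup.of (⟨i+1-1, hj.1⟩ : Fin (n-1)) * FreeGroup.of (⟨i-1, hi.1⟩ : Fin (n-1)) *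
       FreeGroup.of (⟨i+1-1, hj.1⟩ : Fin (n-1)))⁻¹) ∈ braidRels n := by
    right; exact ⟨_, _, by simp; omega, rfl⟩
  have := braid_mk_rel hr
  have h2 : (PresentedGroup.of (⟨i-1, hi.1⟩ : Fin (n-1)) : Braid n) *
      PresentedGroup.of ⟨i+1-1, hj.1⟩ * PresentedGroup.of ⟨i-1, hi.1⟩ *
      (PresentedGroup.of (⟨i+1-1, hj.1⟩ : Fin (n-1)) * PresentedGroup.of ⟨i-1, hi.1⟩ *
       PresentedGroup.of (⟨i+1-1, hj.1⟩ : Fin (n-1)))⁻¹ = 1 := by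
    simpa [PresentedGroup.of] using this
  exact mul_inv_eq_one.mp h2

/-- descending product `σ_a σ_{a-1} ⋯ σ_{b+1}` -/
def desc (n a b : ℕ) : Braid n :=
  ((List.range (a - b)).map (fun k => sigma n (a - k))).prod

lemma desc_of_le {n a b : ℕ} (h : a ≤ b) : desc n a b = 1 := by
  have : a - b = 0 := by omega
  simp [desc, this]

lemma desc_cons {n a b : ℕ} (h : b < a) : desc n a b = sigma n a * desc n (a-1) b := by
  have h1 : a - b = (a - 1 - b) + 1 := by omega
  rw [desc, h1, List.range_succ_eq_map]
  simp only [List.map_cons, List.map_map, List.prod_cons, Nat.sub_zero]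
  congr 1
  rw [desc]
  have : List.map ((fun k => sigma n (a - k)) ∘ Nat.succ) (List.range (a - 1 - b))
      = List.map (fun k => sigma n (a - 1 - k)) (List.range (a - 1 - b)) :=
    List.map_congr_left (fun k _ => by
      show sigma n (a - (k + 1)) = sigma n (a - 1 - k)
      congr 1; omega)
  rw [this]

lemma desc_concat {n a b : ℕ} (h : b < a) : desc n a b = desc n a (b+1) * sigma n (b+1) := by
  have h1 : a - b = (a - (b+1)) + 1 := by omega
  rw [desc, h1, List.range_succ, List.map_append, List.prod_append]
  have e : a - (a - (b+1)) = b + 1 := by omega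
  simp only [List.map_cons, List.map_nil, List.prod_cons, List.prod_nil, mul_one, e]
  rfl

lemma desc_split {n : ℕ} (a c b : ℕ) (hbc : b ≤ c) (hca : c ≤ a) :
    desc n a b = desc n a c * desc n c b := by
  induction c with
  | zero =>
    have : b = 0 := by omega
    subst this; simp [desc_of_le (le_refl 0)]
  | succ m ih =>
    by_cases hb : b = m + 1
    · subst hb; simp [desc_of_le (le_refl (m+1))]
    · have hbm : b ≤ m := by omega
      have hma : m ≤ a := by omega
      calc desc n a b = desc n a m * desc n m b := ih hbm hma
        _ = (desc n a (m+1) * sigma n (m+1)) * desc n m b := by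
            rw [← desc_concat (show m < a by omega)]
        _ = desc n a (m+1) * desc n (m+1) b := by
            rw [desc_cons (show b < m+1 by omega), Nat.add_sub_cancel, mul_assoc]

lemma sigma_desc_comm {n : ℕ} {j a b : ℕ} (h : j < b ∨ a + 1 < j) :
    Commute (sigma n j) (desc n a b) := by
  have : ∀ m, ∀ a, a - b ≤ m → (j < b ∨ a + 1 < j) →
      Commute (sigma n j) (desc n a b) := by
    intro m
    induction m with
    | zero =>
      intro a hm _
      rw [desc_of_le (by omega)]; exact Commute.one_right _
    | succ m ih =>
      intro a hm hj
      by_cases hba' : a ≤ b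
      · rw [desc_of_le hba']; exact Commute.one_right _
      · push_neg at hba'
        rw [desc_cons hba']
        have hcom : Commute (sigma n j) (sigma n a) := by
          rcases hj with hj | hj
          · exact sigma_comm (by omega)
          · exact (sigma_comm (show a + 1 < j by omega)).symm
        exact hcom.mul_right (ih (a-1) (by omega) (by omega))
  exact this (a-b) a le_rfl h

lemma desc_desc_comm {n : ℕ} {a b a' b' : ℕ} (h : a < b') :
    Commute (desc n a b) (desc n a' b') := by
  have : ∀ m, ∀ a, a - b ≤ m → a < b' → Commute (desc n a b) (desc n a' b') := by
    intro m
    induction m with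
    | zero =>
      intro a hm _
      rw [desc_of_le (by omega)]; exact Commute.one_left _
    | succ m ih =>
      intro a hm ha
      by_cases hba' : a ≤ b
      · rw [desc_of_le hba']; exact Commute.one_left _
      · push_neg at hba'
        rw [desc_cons hba']
        exact Commute.mul_left (sigma_desc_comm (Or.inl ha)) (ih (a-1) (by omega) (by omega))
  exact this (a-b) a le_rfl h

/-- braid relation between the band `a_{ts}` and `σ_t` -/
lemma band_sigma_braid {n : ℕ} : ∀ t s : ℕ, 1 ≤ s → s < t → t ≤ n - 1 →
    (desc n (t-1) s * sigma n s * (desc n (t-1) s)⁻¹) * sigma n t *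
      (desc n (t-1) s * sigma n s * (desc n (t-1) s)⁻¹) =
    sigma n t * (desc n (t-1) s * sigma n s * (desc n (t-1) s)⁻¹) * sigma n t := by
  intro t
  induction t with
  | zero => intro s hs hst _; omega
  | succ u ih =>
    intro s hs hst htn
    by_cases hbase : s = u
    · subst hbase
      have h0 : desc n (s+1-1) s = 1 := desc_of_le (by omega)
      rw [h0]
      simpa using sigma_braid (show 1 ≤ s by omega) (by omega)
    · have hsu : s < u := by omega
      have hu1 : 1 ≤ u := by omega
      have hC : desc n (u+1-1) s = sigma n u * desc n (u-1) s := by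
        simpa using desc_cons (show s < u by omega)
      have hXY : desc n (u+1-1) s * sigma n s * (desc n (u+1-1) s)⁻¹
          = sigma n u * (desc n (u-1) s * sigma n s * (desc n (u-1) s)⁻¹) * (sigma n u)⁻¹ := by
        rw [hC]; group
      rw [hXY]
      have hYt : Commute (sigma n (u+1)) (desc n (u-1) s * sigma n s * (desc n (u-1) s)⁻¹) := by
        have h1 : Commute (sigma n (u+1)) (desc n (u-1) s) :=
          sigma_desc_comm (Or.inr (by omega))
        have h2 : Commute (sigma n (u+1)) (sigma n s) :=
          (sigma_comm (show s + 1 < u + 1 by omega)).symm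
        exact (h1.mul_right h2).mul_right h1.inv_right
      have hbraid : sigma n u * sigma n (u+1) * sigma n u
          = sigma n (u+1) * sigma n u * sigma n (u+1) := sigma_braid hu1 htn
      have hih : desc n (u-1) s * sigma n s * (desc n (u-1) s)⁻¹ * sigma n u *
            (desc n (u-1) s * sigma n s * (desc n (u-1) s)⁻¹)
          = sigma n u * (desc n (u-1) s * sigma n s * (desc n (u-1) s)⁻¹) * sigma n u :=
        ih s hs hsu (by omega)
      generalize hYdef : desc n (u-1) s * sigma n s * (desc n (u-1) s)⁻¹ = Y at hYt hih
      generalize had : sigma n u = a at *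
      generalize hbd : sigma n (u+1) = b at *
      have hb1 : a⁻¹ * b * a = b * a * b⁻¹ := by
        calc a⁻¹ * b * a = a⁻¹ * (b * a * b) * b⁻¹ := by group
          _ = a⁻¹ * (a * b * a) * b⁻¹ := by rw [hbraid]
          _ = b * a * b⁻¹ := by group
      calc a * Y * a⁻¹ * b * (a * Y * a⁻¹)
          = a * Y * (a⁻¹ * b * a) * Y * a⁻¹ := by group
        _ = a * Y * (b * a * b⁻¹) * Y * a⁻¹ := by rw [hb1]
        _ = a * (Y * b) * a * (b⁻¹ * Y) * a⁻¹ := by group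
        _ = a * (b * Y) * a * (Y * b⁻¹) * a⁻¹ := by
            rw [← hYt.eq, hYt.inv_left.eq]
        _ = a * b * (Y * a * Y) * b⁻¹ * a⁻¹ := by group
        _ = a * b * (a * Y * a) * b⁻¹ * a⁻¹ := by rw [hih]
        _ = (a * b * a) * Y * (a * b⁻¹ * a⁻¹) := by group
        _ = (b * a * b) * Y * (a * b⁻¹ * a⁻¹) := by rw [hbraid]
        _ = b * a * (b * Y) * (a * b⁻¹ * a⁻¹) := by group
        _ = b * a * (Y * b) * (a * b⁻¹ * a⁻¹) := by rw [hYt.eq]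
        _ = b * a * Y * (b * a * b⁻¹) * a⁻¹ := by group
        _ = b * a * Y * (a⁻¹ * b * a) * a⁻¹ := by rw [← hb1]
        _ = b * (a * Y * a⁻¹) * b := by group

lemma band_adj (n m : ℕ) : band n m (m-1) = sigma n (m-1) := by
  unfold band
  have h0 : m - 1 - (m-1) = 0 := by omega
  rw [h0]
  simp

lemma band_eq_desc (n t s : ℕ) : band n t s = desc n (t-1) s * sigma n s * (desc n (t-1) s)⁻¹ :=
  rfl

lemma bandlist_eq_desc (n x b m : ℕ) (hm : m = x - 1 - b) :
    ((List.range m).map (fun k => band n (x - k) (x - k - 1))).prod = desc n (x-1) b := by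
  subst hm
  rw [desc]
  congr 1
  apply List.map_congr_left
  intro k _
  rw [band_adj]
  have e : x - k - 1 = x - 1 - k := by omega
  rw [e]

lemma delta_eq_desc (n : ℕ) : delta n = desc n (n-1) 0 := rfl


/-- for `n ≥ t > s ≥ 1`,
`δ = a_{ts} (a_{n(n-1)} ⋯ a_{(t+2)(t+1)} a_{(t+1)s} a_{s(s-1)} ⋯ a_{21})
(a_{t(t-1)} ⋯ a_{(s+2)(s+1)})`
(when `t = n` the factor `a_{(t+1)s}` is absent, the index being out of range). -/
theorem delta_starts_with_band (n t s : ℕ)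
    (hs : 1 ≤ s) (hst : s < t) (htn : t ≤ n) :
    delta n =
      band n t s *
        (((List.range (n - 1 - t)).map (fun k => band n (n - k) (n - k - 1))).prod *
          (if t < n then band n (t + 1) s else 1) *
          ((List.range (s - 1)).map (fun k => band n (s - k) (s - k - 1))).prod) *
        ((List.range (t - 1 - s)).map (fun k => band n (t - k) (t - k - 1))).prod := by
  rw [bandlist_eq_desc n n t (n-1-t) rfl, bandlist_eq_desc n s 0 (s-1) (by omega),
    bandlist_eq_desc n t s (t-1-s) rfl, band_eq_desc, delta_eq_desc]
  by_cases htn' : t < n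
  · rw [if_pos htn', band_eq_desc]
    have hD : desc n (t+1-1) s = sigma n t * desc n (t-1) s := by
      rw [Nat.add_sub_cancel]
      exact desc_cons hst
    rw [hD]
    have hB := band_sigma_braid (n := n) t s hs hst (by omega)
    have hCP : Commute (desc n (t-1) s) (desc n (n-1) t) := desc_desc_comm (by omega)
    have hsP : Commute (sigma n s) (desc n (n-1) t) := sigma_desc_comm (Or.inl hst)
    have hXP : Commute (desc n (t-1) s * sigma n s * (desc n (t-1) s)⁻¹) (desc n (n-1) t) :=
      (hCP.mul_left hsP).mul_left hCP.inv_left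
    have hRC : Commute (desc n (s-1) 0) (desc n (t-1) s) := desc_desc_comm (by omega)
    -- LHS expansion
    have hL : desc n (n-1) 0 =
        desc n (n-1) t * (sigma n t * (desc n (t-1) s * (sigma n s * desc n (s-1) 0))) := by
      rw [desc_split (n-1) t 0 (by omega) (by omega), desc_cons (show (0:ℕ) < t by omega),
        desc_split (t-1) s 0 (by omega) (by omega), desc_cons (show (0:ℕ) < s by omega)]
    rw [hL]
    set C := desc n (t-1) s with hCdef
    set P := desc n (n-1) t with hPdef
    set R := desc n (s-1) 0 with hRdef
    set g := sigma n t with hgdef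
    set h := sigma n s with hhdef
    calc P * (g * (C * (h * R)))
        = P * (g * (C * h * C⁻¹)) * (C * R) := by group
      _ = P * (g * (C * h * C⁻¹)) * (R * C) := by rw [← hRC.eq]
      _ = P * ((g * (C * h * C⁻¹) * g) * g⁻¹) * (R * C) := by group
      _ = P * ((C * h * C⁻¹ * g * (C * h * C⁻¹)) * g⁻¹) * (R * C) := by rw [hB]
      _ = (P * (C * h * C⁻¹)) * (g * (C * h * C⁻¹) * g⁻¹ * R) * C := by group
      _ = ((C * h * C⁻¹) * P) * (g * (C * h * C⁻¹) * g⁻¹ * R) * C := by rw [hXP.eq]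
      _ = C * h * C⁻¹ * (P * (g * C * h * (g * C)⁻¹) * R) * C := by group
  · rw [if_neg htn']
    have htn2 : t = n := by omega
    subst htn2
    have hP1 : desc t (t-1) t = 1 := desc_of_le (by omega)
    rw [hP1]
    have hRC : Commute (desc t (s-1) 0) (desc t (t-1) s) := desc_desc_comm (by omega)
    have hL : desc t (t-1) 0 = desc t (t-1) s * (sigma t s * desc t (s-1) 0) := by
      rw [desc_split (t-1) s 0 (by omega) (by omega), desc_cons (show (0:ℕ) < s by omega)]
    rw [hL]
    set C := desc t (t-1) s
    set R := desc t (s-1) 0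
    set h := sigma t s
    calc C * (h * R) = C * h * C⁻¹ * (C * R) := by group
      _ = C * h * C⁻¹ * (R * C) := by rw [← hRC.eq]
      _ = C * h * C⁻¹ * (1 * 1 * R) * C := by group
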